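/- The space δX is a compact Hausdorff space and e(X) is dense in δX. -/

import Mathlib

open Set

variable {X : Type*} [Nonempty X] [TopologicalSpace X] [DiscreteTopology X]

/-- The set `X(f,r) = {x ∈ X : |f(x)| ≤ r}`. -/
def XSet (f : BoundedContinuousFunction X ℂ) (r : ℝ) : Set X := {x | ‖f x‖ ≤ r}

/-- An `F`-family on `X`: a nonempty collection of nonempty subsets of `X` such that for every
member `A ≠ X` there are `B` in the collection and `f ∈ F` with `f(B) = {0}`,
`f(X \ A) = {1}`. -/
def FFamily (F : StarSubalgebra ℂ (BoundedContinuousFunction X ℂ)) (𝒜 : Set (Set X)) : Prop :=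
  𝒜.Nonempty ∧ (∀ A ∈ 𝒜, A.Nonempty) ∧
    ∀ A ∈ 𝒜, A ≠ Set.univ →
      ∃ B ∈ 𝒜, ∃ f ∈ F, (∀ x ∈ B, f x = 0) ∧ ∀ x ∉ A, f x = 1

/-- A filter on the set `X`, viewed as a collection of subsets. -/
def IsSetFilter (φ : Set (Set X)) : Prop :=
  φ.Nonempty ∧ (∀ A ∈ φ, ∀ B ∈ φ, A ∩ B ∈ φ) ∧
    (∀ A ∈ φ, ∀ B : Set X, A ⊆ B → B ∈ φ) ∧ ∅ ∉ φ

/-- An `F`-filter on `X` is a filter which is also an `F`-family. -/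
def FFilter (F : StarSubalgebra ℂ (BoundedContinuousFunction X ℂ)) (φ : Set (Set X)) : Prop :=
  IsSetFilter φ ∧ FFamily F φ

/-- An `F`-ultrafilter on `X` is an `F`-filter maximal with respect to inclusion. -/
def FUltrafilter (F : StarSubalgebra ℂ (BoundedContinuousFunction X ℂ)) (φ : Set (Set X)) : Prop :=
  FFilter F φ ∧ ∀ ψ : Set (Set X), FFilter F ψ → φ ⊆ ψ → ψ = φ

/-- `F₀ = {f ∈ F : X(f,r) ≠ ∅ for all r > 0}`. -/
def FZero (F : StarSubalgebra ℂ (BoundedContinuousFunction X ℂ)) :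
    Set (BoundedContinuousFunction X ℂ) :=
  {f | f ∈ F ∧ ∀ r : ℝ, 0 < r → (XSet f r).Nonempty}

/-- `Z(A) = {f ∈ F : f(x) = 0 for all x ∈ A}`. -/
def ZSet (F : StarSubalgebra ℂ (BoundedContinuousFunction X ℂ)) (A : Set X) :
    Set (BoundedContinuousFunction X ℂ) :=
  {f | f ∈ F ∧ ∀ x ∈ A, f x = 0}

/-- The finite intersection property. -/
def FIP (𝒜 : Set (Set X)) : Prop :=
  ∀ s : Finset (Set X), ↑s ⊆ 𝒜 → s.Nonempty → (⋂₀ (s : Set (Set X))).Nonempty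

/-- A filter base on `X`. -/
def IsFilterBase (ℬ : Set (Set X)) : Prop :=
  ℬ.Nonempty ∧ ∅ ∉ ℬ ∧ ∀ A ∈ ℬ, ∀ B ∈ ℬ, ∃ C ∈ ℬ, C ⊆ A ∩ B

/-- The filter generated by a filter base. -/
def genFilter (ℬ : Set (Set X)) : Set (Set X) :=
  {A | ∃ B ∈ ℬ, B ⊆ A}

/-- `δX`, the space of all `F`-ultrafilters on `X`. -/
def Delta (F : StarSubalgebra ℂ (BoundedContinuousFunction X ℂ)) : Type _ :=
  {p : Set (Set X) // FUltrafilter F p}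

/-- `Â = {p ∈ δX : A ∈ p}`. -/
def hatSet (F : StarSubalgebra ℂ (BoundedContinuousFunction X ℂ)) (A : Set X) :
    Set (Delta F) :=
  {p | A ∈ p.1}

/-- The topology on `δX` having `{Â : A ⊆ X}` as a base. -/
instance (F : StarSubalgebra ℂ (BoundedContinuousFunction X ℂ)) :
    TopologicalSpace (Delta F) :=
  TopologicalSpace.generateFrom {S | ∃ A : Set X, S = hatSet F A}

/-- For an `F`-filter `φ`, `φ̂ = {p ∈ δX : φ ⊆ p}`. -/
def hatF (F : StarSubalgebra ℂ (BoundedContinuousFunction X ℂ)) (φ : Set (Set X)) :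
    Set (Delta F) :=
  {p | φ ⊆ p.1}

/-- `τ(F)`, the weakest topology on `X` making every member of `F` continuous. -/
noncomputable def tauF (F : StarSubalgebra ℂ (BoundedContinuousFunction X ℂ)) : TopologicalSpace X :=
  ⨅ f ∈ (F : Set (BoundedContinuousFunction X ℂ)),
    TopologicalSpace.induced (fun x => f x) inferInstance

/-- `B(I) = {X(f,r) : f ∈ I, r > 0}` for an ideal `I` of `F`. -/
def BIdeal (F : StarSubalgebra ℂ (BoundedContinuousFunction X ℂ)) (I : Ideal F) :
    Set (Set X) :=
  {S | ∃ f ∈ I, ∃ r : ℝ, 0 < r ∧ S = XSet (f : BoundedContinuousFunction X ℂ) r}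

/-!
Since `F` is a closed C*-subalgebra, it contains every `φ ∘ ‖f‖²` with `f ∈ F` and `φ` continuous
(Weierstrass approximation), in particular Urysohn cut-offs; hence every `comap f (𝓝 c)` with
`f ∈ F` satisfies the `F`-family condition. By maximality, every `f ∈ F` then converges along
every `F`-ultrafilter, to any cluster point of its (bounded) values.

Compactness: for an ultrafilter `𝒰` on `δX` every `f ∈ F` converges along the filter
`{A | Â ∈ 𝒰}` (to the `𝒰`-limit of its limits along the points of `δX`). The sets on which the
members of `F` are close to these limits generate an `F`-filter; an `F`-ultrafilter `p` finer than
it shares these limits, which forces the witness of any `A ∈ p` to vanish in the limit, so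
`Â ∈ 𝒰` and `𝒰 → p`.
Hausdorff: if `p` and `q` have no disjoint members, `p ⊓ q` is an `F`-filter, so `p = q`.
Density: a witness `f` for `A ∈ p` vanishing on `B ∈ p` makes `A` a `τ(F)`-neighbourhood of every
point of `B`.
-/

open Filter Topology BoundedContinuousFunction

theorem Filter.Tendsto.bind_nhds {α β γ : Type*} [TopologicalSpace γ] {l : Filter α}
    {m : α → Filter β} {f : β → γ} {g : α → γ} {c : γ} (hg : Tendsto g l (𝓝 c))
    (hf : ∀ a, Tendsto f (m a) (𝓝 (g a))) : Tendsto f (l.bind m) (𝓝 c) :=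
  tendsto_def.2 fun _ hV => mem_bind'.2 <| mem_of_superset (hg (interior_mem_nhds.2 hV))
    fun a ha => hf a (mem_of_superset (isOpen_interior.mem_nhds ha) interior_subset)

theorem Filter.NeBot.bind {α β : Type*} {l : Filter α} [l.NeBot] {m : α → Filter β}
    (hm : ∀ a, (m a).NeBot) : (l.bind m).NeBot :=
  forall_mem_nonempty_iff_neBot.1 fun _ hs =>
    let ⟨_, ha⟩ := Filter.nonempty_of_mem (f := l) (mem_bind'.1 hs)
    (hm _).nonempty_of_mem ha

section Separation

variable {α : Type*} [TopologicalSpace α] (F : StarSubalgebra ℂ (α →ᵇ ℂ))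

def Separates (s t : Set α) : Prop :=
  ∃ f ∈ F, EqOn f 0 s ∧ EqOn f 1 t

def IsFRegular (l : Filter α) : Prop :=
  ∀ A ∈ l, ∃ B ∈ l, Separates F B Aᶜ

variable {F}

theorem Separates.mono {s t s' t' : Set α} (h : Separates F s t) (hs : s' ⊆ s) (ht : t' ⊆ t) :
    Separates F s' t' :=
  let ⟨f, hf, h0, h1⟩ := h
  ⟨f, hf, h0.mono hs, h1.mono ht⟩

theorem Separates.inter_union {s₁ t₁ s₂ t₂ : Set α} (h₁ : Separates F s₁ t₁)
    (h₂ : Separates F s₂ t₂) : Separates F (s₁ ∩ s₂) (t₁ ∪ t₂) := by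
  obtain ⟨f, hf, hf0, hf1⟩ := h₁
  obtain ⟨g, hg, hg0, hg1⟩ := h₂
  refine ⟨f + g - f * g, sub_mem (add_mem hf hg) (mul_mem hf hg), fun x hx => ?_, ?_⟩
  · simp [hf0 hx.1, hg0 hx.2]
  · rintro x (hx | hx)
    · simp [hf1 hx]
    · simp [hg1 hx]

theorem isFRegular_iInf {ι : Sort*} {l : ι → Filter α} (h : ∀ i, IsFRegular F (l i)) :
    IsFRegular F (⨅ i, l i) := by
  refine fun A hA => iInf_sets_induct hA ⟨univ, univ_mem, 0, zero_mem F, fun _ _ => rfl, by simp⟩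
    fun {i A₁ A₂} hA₁ ⟨B₂, hB₂, hsep₂⟩ => ?_
  obtain ⟨B₁, hB₁, hsep₁⟩ := h i A₁ hA₁
  exact ⟨B₁ ∩ B₂, inter_mem (mem_iInf_of_mem i hB₁) hB₂,
    (hsep₁.inter_union hsep₂).mono subset_rfl (compl_inter A₁ A₂).subset⟩

theorem IsFRegular.inf {l₁ l₂ : Filter α} (h₁ : IsFRegular F l₁) (h₂ : IsFRegular F l₂) :
    IsFRegular F (l₁ ⊓ l₂) := by
  rw [inf_eq_iInf]
  exact isFRegular_iInf (Bool.forall_bool.2 ⟨h₂, h₁⟩)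

theorem exists_mem_apply_eq_eval {b : α →ᵇ ℂ} (hb : b ∈ F) {u : α → ℝ} (hbu : ∀ x, b x = u x)
    (q : Polynomial ℝ) : ∃ g ∈ F, ∀ x, g x = q.eval (u x) := by
  induction q using Polynomial.induction_on' with
  | add p q hp hq =>
    obtain ⟨g₁, hg₁, h₁⟩ := hp
    obtain ⟨g₂, hg₂, h₂⟩ := hq
    exact ⟨g₁ + g₂, add_mem hg₁ hg₂, fun x => by simp [h₁, h₂]⟩
  | monomial n a =>
    exact ⟨(a : ℂ) • b ^ n, F.smul_mem (pow_mem hb n) _, fun x => by simp [hbu]⟩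

theorem exists_mem_apply_eq_comp (hF : IsClosed (F : Set (α →ᵇ ℂ))) {b : α →ᵇ ℂ} (hb : b ∈ F)
    {u : α → ℝ} (hbu : ∀ x, b x = u x) {φ : ℝ → ℝ} (hφ : Continuous φ) :
    ∃ g ∈ F, ∀ x, g x = φ (u x) := by
  have hu_mem : ∀ x, u x ∈ Icc (-‖b‖) ‖b‖ := fun x =>
    abs_le.1 (by simpa [hbu] using b.norm_coe_le_norm x)
  have hu : Continuous u := by
    simpa [Function.comp_def, hbu] using Complex.continuous_re.comp b.continuous
  obtain ⟨C, hC⟩ := isCompact_Icc.exists_bound_of_continuousOn hφ.continuousOn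
  let G : α →ᵇ ℂ := .ofNormedAddCommGroup (fun x => (φ (u x) : ℂ))
    (Complex.continuous_ofReal.comp (hφ.comp hu)) C fun x => by simpa using hC _ (hu_mem x)
  refine ⟨G, hF.closure_subset <| Metric.mem_closure_iff.2 fun ε hε => ?_, fun x => rfl⟩
  obtain ⟨q, hq⟩ := exists_polynomial_near_of_continuousOn _ _ φ hφ.continuousOn (ε / 2)
    (half_pos hε)
  obtain ⟨g, hg, hgq⟩ := exists_mem_apply_eq_eval hb hbu q
  refine ⟨g, hg, lt_of_le_of_lt ((BoundedContinuousFunction.dist_le (half_pos hε).le).2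
    fun x => ?_) (half_lt_self hε)⟩
  rw [hgq, Complex.dist_eq]
  simpa [G, ← Complex.ofReal_sub, abs_sub_comm] using (hq _ (hu_mem x)).le

theorem separates_norm_le_norm_ge (hF : IsClosed (F : Set (α →ᵇ ℂ))) {g : α →ᵇ ℂ} (hg : g ∈ F)
    {s t : ℝ} (hs : 0 ≤ s) (hst : s < t) :
    Separates F {x | ‖g x‖ ≤ s} {x | t ≤ ‖g x‖} := by
  obtain ⟨φ, hφ0, hφ1, -⟩ := exists_continuous_zero_one_of_isClosed (isClosed_Iic (a := s ^ 2))
    (isClosed_Ici (a := t ^ 2)) (Iic_disjoint_Ici.2 (by nlinarith))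
  have hbu : ∀ x, (star g * g) x = ((‖g x‖ ^ 2 : ℝ) : ℂ) := fun x => by
    simp [Complex.conj_mul']
  obtain ⟨f, hf, hfx⟩ := exists_mem_apply_eq_comp hF (mul_mem (star_mem hg) hg) hbu φ.continuous
  refine ⟨f, hf, fun x hx => ?_, fun x hx => ?_⟩
  · simp [hfx, hφ0 (show ‖g x‖ ^ 2 ≤ s ^ 2 from pow_le_pow_left₀ (norm_nonneg _) hx 2)]
  · simp [hfx, hφ1 (show t ^ 2 ≤ ‖g x‖ ^ 2 from pow_le_pow_left₀ (hs.trans hst.le) hx 2)]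

theorem isFRegular_comap_nhds (hF : IsClosed (F : Set (α →ᵇ ℂ))) {g : α →ᵇ ℂ} (hg : g ∈ F)
    (c : ℂ) : IsFRegular F (comap g (𝓝 c)) := by
  intro A hA
  obtain ⟨r, hr, hrA⟩ := (Metric.nhds_basis_ball.comap g).mem_iff.1 hA
  have hsep := separates_norm_le_norm_ge hF (sub_mem hg (algebraMap_mem F c)) (half_pos hr).le
    (half_lt_self hr)
  refine ⟨_, preimage_mem_comap (Metric.closedBall_mem_nhds c (half_pos hr)),
    hsep.mono (fun x hx => ?_) (fun x hx => ?_)⟩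
  · simpa [dist_eq_norm] using hx
  · simpa [dist_eq_norm] using not_lt.1 fun h => hx (hrA (by simpa [dist_eq_norm] using h))

end Separation

section FUltrafilter

variable {α : Type*} [TopologicalSpace α] {F : StarSubalgebra ℂ (α →ᵇ ℂ)}

theorem fFilter_sets {l : Filter α} [l.NeBot] (hl : IsFRegular F l) : FFilter F l.sets :=
  ⟨⟨⟨univ, univ_mem⟩, fun _ hA _ hB => inter_mem hA hB, fun _ hA _ hAB => mem_of_superset hA hAB,
      empty_notMem l⟩,
    ⟨univ, univ_mem⟩, fun _ hA => nonempty_of_mem hA, fun A hA _ =>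
      let ⟨B, hB, f, hf, h0, h1⟩ := hl A hA
      ⟨B, hB, f, hf, fun _ hx => h0 hx, fun _ hx => h1 hx⟩⟩

theorem fFilter_sUnion {c : Set (Set (Set α))} (hc : ∀ φ ∈ c, FFilter F φ)
    (hchain : IsChain (· ⊆ ·) c) (hne : c.Nonempty) : FFilter F (⋃₀ c) := by
  obtain ⟨φ₀, hφ₀⟩ := hne
  have huniv : univ ∈ ⋃₀ c :=
    let ⟨A, hA⟩ := (hc φ₀ hφ₀).1.1
    ⟨φ₀, hφ₀, (hc φ₀ hφ₀).1.2.2.1 A hA univ (subset_univ A)⟩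
  refine ⟨⟨⟨univ, huniv⟩, ?_, ?_, ?_⟩, ⟨univ, huniv⟩, ?_, ?_⟩
  · rintro A ⟨φ, hφ, hA⟩ B ⟨ψ, hψ, hB⟩
    rcases hchain.total hφ hψ with h | h
    · exact ⟨ψ, hψ, (hc ψ hψ).1.2.1 A (h hA) B hB⟩
    · exact ⟨φ, hφ, (hc φ hφ).1.2.1 A hA B (h hB)⟩
  · rintro A ⟨φ, hφ, hA⟩ B hAB
    exact ⟨φ, hφ, (hc φ hφ).1.2.2.1 A hA B hAB⟩
  · rintro ⟨φ, hφ, h⟩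
    exact (hc φ hφ).1.2.2.2 h
  · rintro A ⟨φ, hφ, hA⟩
    exact (hc φ hφ).2.2.1 A hA
  · rintro A ⟨φ, hφ, hA⟩ hAu
    obtain ⟨B, hB, f, hf, h0, h1⟩ := (hc φ hφ).2.2.2 A hA hAu
    exact ⟨B, ⟨φ, hφ, hB⟩, f, hf, h0, h1⟩

theorem exists_fUltrafilter_superset {φ : Set (Set α)} (hφ : FFilter F φ) :
    ∃ p, FUltrafilter F p ∧ φ ⊆ p := by
  obtain ⟨p, hφp, hp⟩ := zorn_subset_nonempty {ψ | FFilter F ψ}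
    (fun c hc hchain hne => ⟨⋃₀ c, fFilter_sUnion hc hchain hne, fun _ => subset_sUnion_of_mem⟩)
    φ hφ
  exact ⟨p, ⟨hp.prop, fun ψ hψ hpψ => (hp.eq_of_le hψ hpψ).symm⟩, hφp⟩

namespace Delta

def toFilter (p : Delta F) : Filter α where
  sets := p.1
  univ_sets := let ⟨A, hA⟩ := p.2.1.1.1; p.2.1.1.2.2.1 A hA univ (subset_univ A)
  sets_of_superset hA hAB := p.2.1.1.2.2.1 _ hA _ hAB
  inter_sets hA hB := p.2.1.1.2.1 _ hA _ hB

instance (p : Delta F) : p.toFilter.NeBot :=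
  ⟨fun h => p.2.1.1.2.2.2 (empty_mem_iff_bot.2 h)⟩

theorem toFilter_injective : Function.Injective (toFilter (F := F)) := fun _ _ h =>
  Subtype.ext (congrArg Filter.sets h)

theorem isFRegular (p : Delta F) : IsFRegular F p.toFilter := by
  intro A hA
  by_cases hAu : A = univ
  · exact ⟨univ, univ_mem, 0, zero_mem F, fun _ _ => rfl, by simp [hAu]⟩
  · obtain ⟨B, hB, f, hf, h0, h1⟩ := p.2.1.2.2.2 A hA hAu
    exact ⟨B, hB, f, hf, fun x hx => h0 x hx, fun x hx => h1 x hx⟩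

theorem eq_toFilter_of_le (p : Delta F) {l : Filter α} [l.NeBot] (hl : IsFRegular F l)
    (h : l ≤ p.toFilter) : l = p.toFilter :=
  Filter.filter_eq (p.2.2 _ (fFilter_sets hl) h)

theorem exists_toFilter_le {l : Filter α} [l.NeBot] (hl : IsFRegular F l) :
    ∃ p : Delta F, p.toFilter ≤ l :=
  let ⟨p, hp, hlp⟩ := exists_fUltrafilter_superset (fFilter_sets hl)
  ⟨⟨p, hp⟩, hlp⟩

theorem eq_of_inf_neBot {p q : Delta F} (h : (p.toFilter ⊓ q.toFilter).NeBot) : p = q :=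
  have hpq := p.isFRegular.inf q.isFRegular
  toFilter_injective <|
    (p.eq_toFilter_of_le hpq inf_le_left).symm.trans (q.eq_toFilter_of_le hpq inf_le_right)

theorem exists_tendsto (hF : IsClosed (F : Set (α →ᵇ ℂ))) (p : Delta F) {f : α →ᵇ ℂ}
    (hf : f ∈ F) : ∃ c, Tendsto f p.toFilter (𝓝 c) := by
  obtain ⟨c, -, hc⟩ := (isCompact_closedBall (0 : ℂ) ‖f‖).exists_clusterPt (f := map f p.toFilter)
    (le_principal_iff.2 (mem_map.2 (univ_mem' fun x => by simpa using f.norm_coe_le_norm x)))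
  have : (p.toFilter ⊓ comap f (𝓝 c)).NeBot := by
    rw [← map_neBot_iff f, Filter.push_pull, inf_comm]
    exact hc.neBot
  have hp := p.eq_toFilter_of_le (p.isFRegular.inf (isFRegular_comap_nhds hF hf c)) inf_le_left
  exact ⟨c, tendsto_iff_comap.2 (hp ▸ inf_le_right)⟩

theorem le_nhds_iff {l : Filter (Delta F)} {p : Delta F} :
    l ≤ 𝓝 p ↔ ∀ A ∈ p.toFilter, hatSet F A ∈ l := by
  rw [← tendsto_id', TopologicalSpace.tendsto_nhds_generateFrom_iff]
  refine ⟨fun h A hA => h _ ⟨A, rfl⟩ hA, ?_⟩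
  rintro h _ ⟨A, rfl⟩ hA
  exact h A hA

theorem hatSet_mem_nhds {p : Delta F} {A : Set α} (hA : A ∈ p.toFilter) : hatSet F A ∈ 𝓝 p :=
  le_nhds_iff.1 le_rfl A hA

theorem isTopologicalBasis_hatSet :
    TopologicalSpace.IsTopologicalBasis {S : Set (Delta F) | ∃ A, S = hatSet F A} := by
  refine ⟨?_, eq_univ_of_forall fun p => ⟨hatSet F univ, ⟨univ, rfl⟩, univ_mem (f := p.toFilter)⟩,
    rfl⟩
  rintro _ ⟨A, rfl⟩ _ ⟨B, rfl⟩ p ⟨hA, hB⟩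
  exact ⟨hatSet F (A ∩ B), ⟨A ∩ B, rfl⟩, inter_mem (f := p.toFilter) hA hB,
    fun q hq => ⟨mem_of_superset (f := q.toFilter) hq inter_subset_left,
      mem_of_superset (f := q.toFilter) hq inter_subset_right⟩⟩

instance : T2Space (Delta F) := t2_iff_nhds.2 fun {_ _} h => eq_of_inf_neBot <|
  inf_neBot_iff.2 fun _ hB _ hC =>
    let ⟨r, hrB, hrC⟩ :=
      h.nonempty_of_mem (inter_mem_inf (hatSet_mem_nhds hB) (hatSet_mem_nhds hC))
    nonempty_of_mem (inter_mem (f := r.toFilter) hrB hrC)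

theorem exists_le_toFilter_of_forall_tendsto (hF : IsClosed (F : Set (α →ᵇ ℂ))) {ψ : Filter α}
    [ψ.NeBot] (hψ : ∀ f ∈ F, ∃ d, Tendsto f ψ (𝓝 d)) : ∃ p : Delta F, ψ ≤ p.toFilter := by
  let ι := {fd : (α →ᵇ ℂ) × ℂ // fd.1 ∈ F ∧ Tendsto fd.1 ψ (𝓝 fd.2)}
  have hψ₀ : ψ ≤ ⨅ i : ι, comap i.1.1 (𝓝 i.1.2) := le_iInf fun i => i.2.2.le_comap
  have := neBot_of_le hψ₀
  obtain ⟨p, hp⟩ :=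
    exists_toFilter_le (isFRegular_iInf fun i : ι => isFRegular_comap_nhds hF i.2.1 i.1.2)
  refine ⟨p, fun A hA => ?_⟩
  obtain ⟨B, hB, f, hf, hf0, hf1⟩ := p.isFRegular A hA
  obtain ⟨d, hd⟩ := hψ f hf
  have hpd : Tendsto f p.toFilter (𝓝 d) :=
    tendsto_iff_comap.2 (hp.trans (iInf_le _ (⟨(f, d), hf, hd⟩ : ι)))
  have hp0 : Tendsto f p.toFilter (𝓝 0) :=
    tendsto_const_nhds.congr' (eventuallyEq_of_mem hB fun x hx => (hf0 hx).symm)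
  rw [tendsto_nhds_unique hpd hp0] at hd
  filter_upwards [hd (Metric.ball_mem_nhds 0 one_pos)] with x hx
  by_contra hxA
  simp [hf1 hxA] at hx

theorem compactSpace (hF : IsClosed (F : Set (α →ᵇ ℂ))) : CompactSpace (Delta F) := by
  refine ⟨isCompact_iff_ultrafilter_le_nhds.2 fun 𝒰 _ => ?_⟩
  have : ((𝒰 : Filter (Delta F)).bind toFilter).NeBot := NeBot.bind fun _ => inferInstance
  obtain ⟨p, hp⟩ := exists_le_toFilter_of_forall_tendsto hF fun f hf => by
    choose χ hχ using fun q : Delta F => q.exists_tendsto hF hf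
    have hχ_mem : ∀ q, χ q ∈ Metric.closedBall 0 ‖f‖ := fun q =>
      Metric.isClosed_closedBall.mem_of_tendsto (hχ q)
        (univ_mem' fun x => by simpa using f.norm_coe_le_norm x)
    obtain ⟨d, -, hd⟩ := (isCompact_closedBall (0 : ℂ) ‖f‖).ultrafilter_le_nhds (𝒰.map χ)
      (le_principal_iff.2 (mem_map.2 (univ_mem' hχ_mem)))
    exact ⟨d, Tendsto.bind_nhds hd hχ⟩
  exact ⟨p, mem_univ p, le_nhds_iff.2 fun A hA => mem_bind'.1 (hp hA)⟩

end Delta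

theorem mem_nhds_tauF_of_separates {B A : Set α} (hBA : Separates F B Aᶜ) {x : α} (hx : x ∈ B) :
    A ∈ @nhds α (tauF F) x := by
  let _ := tauF F
  obtain ⟨f, hf, hf0, hf1⟩ := hBA
  have hfc : Continuous f :=
    continuous_iInf_dom (continuous_iInf_dom (i := hf) continuous_induced_dom)
  refine mem_of_superset ((hfc.isOpen_preimage (Metric.ball 0 1) Metric.isOpen_ball).mem_nhds
    (by simp [hf0 hx])) fun y hy => ?_
  by_contra hyA
  simp [hf1 hyA] at hy

end FUltrafilter

theorem stmt10 (F : StarSubalgebra ℂ (BoundedContinuousFunction X ℂ)) (hF : IsClosed (F : Set (BoundedContinuousFunction X ℂ))) (e : X → Delta F) (he : ∀ x : X, (e x).1 = {A : Set X | A ∈ @nhds X (tauF F) x}) :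
    CompactSpace (Delta F) ∧ T2Space (Delta F) ∧ Dense (Set.range e) := by
  refine ⟨Delta.compactSpace hF, inferInstance, ?_⟩
  rw [Delta.isTopologicalBasis_hatSet.dense_iff]
  rintro _ ⟨A, rfl⟩ ⟨p, hA⟩
  obtain ⟨B, hB, hBA⟩ := p.isFRegular A hA
  obtain ⟨x, hx⟩ := Filter.nonempty_of_mem hB
  refine ⟨e x, ?_, x, rfl⟩
  change A ∈ (e x).1
  rw [he]
  exact mem_nhds_tauF_of_separates hBA hx
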